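/- Let τ, α, μ > 0, set β = α/τ and θ = μ²/τ, let k ∈ ℂ, and let Λ(k) be the 2×2 matrix with rows (0, ik) and (ikβ, θk² + 1/τ). Let e, q, f : ℝ × ℝ → ℂ be twice continuously differentiable and satisfy ∂ₜe + ∂ₓq = f and τ·∂ₜq + q − μ²·∂ₓ²q + α·∂ₓe = 0 on ℝ². Define u(x,t) = (e(x,t), q(x,t))ᵀ, F(x,t) = (f(x,t), 0)ᵀ, and (Xu)(x,t) = (−q(x,t), −β·e(x,t) + θ·(ik·q(x,t) + ∂ₓq(x,t)))ᵀ. Then at every (x,t) the matrix local relation holds: ∂ₜ[ e^{−ikx}·exp(Λ(k)·t)·u(x,t) ] − ∂ₓ[ e^{−ikx}·exp(Λ(k)·t)·(Xu)(x,t) ] = e^{−ikx}·exp(Λ(k)·t)·F(x,t), where exp denotes the matrix exponential. -/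

import Mathlib

/-
With `E(t) = exp(tΛ)` and `c(x) = e^{-ikx}`, the product rule together with `E' = EΛ` gives
`∂ₜ[c E u] = c E (Λu + ∂ₜu)` and `∂ₓ[c E Xu] = c E (∂ₓXu − ik Xu)`. The relation thus reduces
to the pointwise identity `Λu + ∂ₜu − (∂ₓXu − ik Xu) = F`: its first row is the energy balance,
its second row is `1/τ` times the constitutive equation (the `θk²q` terms cancel as `i² = −1`).
-/

open Complex Matrix

/-- Partial derivative in the spatial variable `x` (first coordinate),
for vector-valued functions. -/
noncomputable def px {E : Type*} [NormedAddCommGroup E] [NormedSpace ℝ E]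
    (u : ℝ × ℝ → E) : ℝ × ℝ → E :=
  fun p => deriv (fun x => u (x, p.2)) p.1

/-- Partial derivative in the time variable `t` (second coordinate),
for vector-valued functions. -/
noncomputable def pt {E : Type*} [NormedAddCommGroup E] [NormedSpace ℝ E]
    (u : ℝ × ℝ → E) : ℝ × ℝ → E :=
  fun p => deriv (fun t => u (p.1, t)) p.2

/-- The symbol matrix `Λ(k)` of the one-dimensional Guyer–Krumhansl system,
written with `β = α/τ` and `θ = μ²/τ`. -/
noncomputable def GKLambda (τ β θ : ℝ) (k : ℂ) : Matrix (Fin 2) (Fin 2) ℂ :=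
  !![0, I * k;
     I * k * (β : ℂ), (θ : ℂ) * k^2 + 1 / (τ : ℂ)]

section PartialDerivatives

variable {E : Type*} [NormedAddCommGroup E] [NormedSpace ℝ E] {g : ℝ × ℝ → E}

theorem hasDerivAt_px {x t : ℝ} (hg : DifferentiableAt ℝ g (x, t)) :
    HasDerivAt (fun y => g (y, t)) (px g (x, t)) x :=
  (hg.comp x (differentiableAt_id.prodMk (differentiableAt_const t))).hasDerivAt

theorem hasDerivAt_pt {x t : ℝ} (hg : DifferentiableAt ℝ g (x, t)) :
    HasDerivAt (fun s => g (x, s)) (pt g (x, t)) t :=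
  (hg.comp t ((differentiableAt_const x).prodMk differentiableAt_id)).hasDerivAt

theorem px_eq_fderiv_apply (hg : Differentiable ℝ g) :
    px g = fun p => fderiv ℝ g p (1, 0) := by
  funext p
  exact ((hg p).hasFDerivAt.comp_hasDerivAt p.1
    ((hasDerivAt_id p.1).prodMk (hasDerivAt_const p.1 p.2))).deriv

theorem contDiff_px {n : WithTop ℕ∞} (hg : ContDiff ℝ (n + 1) g) : ContDiff ℝ n (px g) := by
  rw [px_eq_fderiv_apply (hg.differentiable (by simp))]
  exact (hg.fderiv_right le_rfl).clm_apply contDiff_const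

end PartialDerivatives

section MatrixCalculus

variable {n : Type*} [Fintype n]

theorem HasDerivAt.mulVec {𝕜 R : Type*} [NontriviallyNormedField 𝕜] [NormedCommRing R]
    [NormedAlgebra 𝕜 R] {M : 𝕜 → Matrix n n R} {M' : Matrix n n R} {v : 𝕜 → n → R}
    {v' : n → R} {t : 𝕜} (hM : ∀ i j, HasDerivAt (fun s => M s i j) (M' i j) t)
    (hv : HasDerivAt v v' t) :
    HasDerivAt (fun s => M s *ᵥ v s) (M' *ᵥ v t + M t *ᵥ v') t := by
  refine hasDerivAt_pi.2 fun i => ?_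
  simp only [Pi.add_apply, Matrix.mulVec, dotProduct, ← Finset.sum_add_distrib]
  exact HasDerivAt.fun_sum fun j _ => (hM i j).mul (hasDerivAt_pi.1 hv j)

variable [DecidableEq n]

theorem hasDerivAt_exp_ofReal_smul_apply (A : Matrix n n ℂ) (t : ℝ) (i j : n) :
    HasDerivAt (fun s : ℝ => NormedSpace.exp ((s : ℂ) • A) i j)
      ((NormedSpace.exp ((t : ℂ) • A) * A) i j) t := by
  -- Matrices carry no global norm; any algebra norm will do, since entries are continuous linear.
  let : NormedRing (Matrix n n ℂ) := Matrix.linftyOpNormedRing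
  let : NormedAlgebra ℂ (Matrix n n ℂ) := Matrix.linftyOpNormedAlgebra
  have hexp := hasDerivAt_exp_smul_const (𝕂 := ℂ) A (t : ℂ)
  exact ((LinearMap.toContinuousLinearMap (entryLinearMap ℂ ℂ i j)).hasFDerivAt.comp_hasDerivAt
    _ hexp).comp_ofReal

end MatrixCalculus

theorem HasDerivAt.cexp_neg_mul_smul {E : Type*} [NormedAddCommGroup E] [NormedSpace ℂ E]
    (k : ℂ) {w : ℝ → E} {w' : E} {x : ℝ} (hw : HasDerivAt w w' x) :
    HasDerivAt (fun y : ℝ => cexp (-(I * k * y)) • w y)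
      (cexp (-(I * k * x)) • (w' - (I * k) • w x)) x := by
  have hc : HasDerivAt (fun y : ℝ => cexp (-(I * k * y))) (cexp (-(I * k * x)) * -(I * k)) x := by
    simpa using (((hasDerivAt_id (x : ℂ)).const_mul (I * k)).neg.cexp).comp_ofReal
  convert hc.fun_smul hw using 1
  module

section LocalRelation

variable {n : Type*} [Fintype n] [DecidableEq n] (A : Matrix n n ℂ) (k : ℂ)

theorem pt_cexp_smul_exp_mulVec {v : ℝ × ℝ → n → ℂ} {v' : n → ℂ} {x t : ℝ}
    (hv : HasDerivAt (fun s => v (x, s)) v' t) :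
    pt (fun p => cexp (-(I * k * p.1)) • NormedSpace.exp ((p.2 : ℂ) • A) *ᵥ v p) (x, t) =
      cexp (-(I * k * x)) • NormedSpace.exp ((t : ℂ) • A) *ᵥ (A *ᵥ v (x, t) + v') := by
  rw [mulVec_add, mulVec_mulVec]
  exact ((HasDerivAt.mulVec (hasDerivAt_exp_ofReal_smul_apply A t) hv).const_smul
    (cexp (-(I * k * x)))).deriv

theorem px_cexp_smul_exp_mulVec {w : ℝ × ℝ → n → ℂ} {w' : n → ℂ} {x t : ℝ}
    (hw : HasDerivAt (fun y => w (y, t)) w' x) :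
    px (fun p => cexp (-(I * k * p.1)) • NormedSpace.exp ((p.2 : ℂ) • A) *ᵥ w p) (x, t) =
      cexp (-(I * k * x)) • NormedSpace.exp ((t : ℂ) • A) *ᵥ (w' - (I * k) • w (x, t)) := by
  have hconst (i j : n) := hasDerivAt_const x (NormedSpace.exp ((t : ℂ) • A) i j)
  rw [mulVec_sub, mulVec_smul, ← zero_add (_ *ᵥ w'), ← zero_mulVec (w (x, t))]
  exact ((HasDerivAt.mulVec (M' := 0) hconst hw).cexp_neg_mul_smul k).deriv

end LocalRelation

theorem GKLambda_mulVec_add_sub_eq {τ α μ β θ : ℝ} (hτ : τ ≠ 0) (hβ : β = α / τ)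
    (hθ : θ = μ ^ 2 / τ) (k e q et qt ex qx qxx f : ℂ) (hbalance : et + qx = f)
    (hconstitutive : τ * qt + q - μ ^ 2 * qxx + α * ex = 0) :
    GKLambda τ β θ k *ᵥ ![e, q] + ![et, qt]
        - (![-qx, -β * ex + θ * (I * k * qx + qxx)]
          - (I * k) • ![-q, -β * e + θ * (I * k * q + qx)])
      = ![f, 0] := by
  have hτ' : (τ : ℂ) ≠ 0 := ofReal_ne_zero.2 hτ
  subst hβ hθ
  ext i
  fin_cases i
  · simp [GKLambda, vecHead, vecTail]
    linear_combination hbalance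
  · simp [GKLambda, vecHead, vecTail]
    field_simp
    linear_combination hconstitutive + k ^ 2 * q * μ ^ 2 * I_sq

theorem GK_matrix_local_relation_general
    (τ α μ β θ : ℝ) (hτ : 0 < τ)
    (hβ : β = α / τ) (hθ : θ = μ^2 / τ) (k : ℂ)
    (e q f : ℝ × ℝ → ℂ)
    (he : ContDiff ℝ 2 e) (hq : ContDiff ℝ 2 q)
    (hbalance : ∀ p : ℝ × ℝ, pt e p + px q p = f p)
    (hconstitutive : ∀ p : ℝ × ℝ,
      (τ : ℂ) * pt q p + q p - (μ : ℂ)^2 * px (px q) p + (α : ℂ) * px e p = 0)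
    (u F Xu : ℝ × ℝ → Fin 2 → ℂ)
    (hu : ∀ p : ℝ × ℝ, u p = ![e p, q p])
    (hF : ∀ p : ℝ × ℝ, F p = ![f p, 0])
    (hXu : ∀ p : ℝ × ℝ,
      Xu p = ![-q p, -(β : ℂ) * e p + (θ : ℂ) * (I * k * q p + px q p)]) :
    ∀ p : ℝ × ℝ,
      pt (fun p => Complex.exp (-(I * k * (p.1 : ℂ))) •
            (NormedSpace.exp ((p.2 : ℂ) • GKLambda τ β θ k)).mulVec (u p)) p
      - px (fun p => Complex.exp (-(I * k * (p.1 : ℂ))) •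
            (NormedSpace.exp ((p.2 : ℂ) • GKLambda τ β θ k)).mulVec (Xu p)) p
      = Complex.exp (-(I * k * (p.1 : ℂ))) •
          (NormedSpace.exp ((p.2 : ℂ) • GKLambda τ β θ k)).mulVec (F p) := by
  rintro ⟨x, t⟩
  have hed : Differentiable ℝ e := he.differentiable two_ne_zero
  have hqd : Differentiable ℝ q := hq.differentiable two_ne_zero
  have hpxq : Differentiable ℝ (px q) := (contDiff_px (n := 1) hq).differentiable one_ne_zero
  have hu_t : HasDerivAt (fun s => u (x, s)) ![pt e (x, t), pt q (x, t)] t := by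
    simp only [hu]
    exact hasDerivAt_pi.2 <| Fin.forall_fin_two.2 ⟨hasDerivAt_pt (hed _), hasDerivAt_pt (hqd _)⟩
  have hXu_x : HasDerivAt (fun y => Xu (y, t))
      ![-px q (x, t), -(β : ℂ) * px e (x, t) + θ * (I * k * px q (x, t) + px (px q) (x, t))] x := by
    simp only [hXu]
    exact hasDerivAt_pi.2 <| Fin.forall_fin_two.2
      ⟨(hasDerivAt_px (hqd _)).neg, ((hasDerivAt_px (hed _)).const_mul _).add
        ((((hasDerivAt_px (hqd _)).const_mul _).add (hasDerivAt_px (hpxq _))).const_mul _)⟩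
  rw [pt_cexp_smul_exp_mulVec _ k hu_t, px_cexp_smul_exp_mulVec _ k hXu_x, ← smul_sub,
    ← mulVec_sub, hu, hXu, hF, GKLambda_mulVec_add_sub_eq hτ.ne' hβ hθ k _ _ _ _ _ _ _ _
      (hbalance (x, t)) (hconstitutive (x, t))]

/-- The matrix local relation for the Guyer–Krumhansl system:
`∂ₜ[e^{−ikx}·exp(Λ(k)t)·u] − ∂ₓ[e^{−ikx}·exp(Λ(k)t)·(Xu)] = e^{−ikx}·exp(Λ(k)t)·F`. -/
theorem GK_matrix_local_relation
    (τ α μ β θ : ℝ) (hτ : 0 < τ) (hα : 0 < α) (hμ : 0 < μ)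
    (hβ : β = α / τ) (hθ : θ = μ^2 / τ) (k : ℂ)
    (e q f : ℝ × ℝ → ℂ)
    (he : ContDiff ℝ 2 e) (hq : ContDiff ℝ 2 q) (hf : ContDiff ℝ 2 f)
    (hbalance : ∀ p : ℝ × ℝ, pt e p + px q p = f p)
    (hconstitutive : ∀ p : ℝ × ℝ,
      (τ : ℂ) * pt q p + q p - (μ : ℂ)^2 * px (px q) p + (α : ℂ) * px e p = 0)
    (u F Xu : ℝ × ℝ → Fin 2 → ℂ)
    (hu : ∀ p : ℝ × ℝ, u p = ![e p, q p])
    (hF : ∀ p : ℝ × ℝ, F p = ![f p, 0])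
    (hXu : ∀ p : ℝ × ℝ,
      Xu p = ![-q p, -(β : ℂ) * e p + (θ : ℂ) * (I * k * q p + px q p)]) :
    ∀ p : ℝ × ℝ,
      pt (fun p => Complex.exp (-(I * k * (p.1 : ℂ))) •
            (NormedSpace.exp ((p.2 : ℂ) • GKLambda τ β θ k)).mulVec (u p)) p
      - px (fun p => Complex.exp (-(I * k * (p.1 : ℂ))) •
            (NormedSpace.exp ((p.2 : ℂ) • GKLambda τ β θ k)).mulVec (Xu p)) p
      = Complex.exp (-(I * k * (p.1 : ℂ))) •
          (NormedSpace.exp ((p.2 : ℂ) • GKLambda τ β θ k)).mulVec (F p) :=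
  GK_matrix_local_relation_general τ α μ β θ hτ hβ hθ k e q f he hq hbalance hconstitutive u F Xu hu
    hF hXu
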